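/- arXiv:1210.4640 — 2 statements merged into one kernel-verified Lean document; each statement's English description precedes it below -/
import Mathlib

section
/- Let N = 10, α = 199/200, and g(μ) = μ^{N²} + α·N²·(1-μ)·μ^{N²-1}. Then g is concave on the interval [α, 1], i.e., its second derivative is nonpositive there. -/
/-! Writing `M = m + 3`, one has `g = (1 - αM) t^M + αM t^(M-1)`, so
`g'' = M(M-1) t^(M-3) ((1 - αM) t + α(M-2))`. When `αM ≥ M - 1` the bracket is decreasing
in `t` and already nonpositive at `t = α`, where it equals `α (M - 1 - αM)`. -/

theorem hasDerivAt_const_mul_pow_add_const_mul_pow (a b : ℝ) (n : ℕ) (t : ℝ) :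
    HasDerivAt (fun t : ℝ => a * t ^ (n + 2) + b * t ^ (n + 1))
      (a * (n + 2) * t ^ (n + 1) + b * (n + 1) * t ^ n) t := by
  refine (((hasDerivAt_pow (n + 2) t).const_mul a).add
    ((hasDerivAt_pow (n + 1) t).const_mul b)).congr_deriv ?_
  push_cast [show n + 2 - 1 = n + 1 by omega, Nat.add_sub_cancel]
  ring

theorem deriv_deriv_reliability (α : ℝ) (m : ℕ) :
    deriv (deriv fun t : ℝ => t ^ (m + 3) + α * (m + 3) * (1 - t) * t ^ (m + 2)) =
      fun t => (m + 3) * (m + 2) * t ^ m * ((1 - α * (m + 3)) * t + α * (m + 1)) := by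
  set a : ℝ := 1 - α * (m + 3)
  set b : ℝ := α * (m + 3)
  have hg : (fun t : ℝ => t ^ (m + 3) + α * (m + 3) * (1 - t) * t ^ (m + 2)) =
      fun t => a * t ^ (m + 1 + 2) + b * t ^ (m + 1 + 1) := by
    funext t
    ring
  have hg' : deriv (fun t : ℝ => a * t ^ (m + 1 + 2) + b * t ^ (m + 1 + 1)) =
      fun t => a * (m + 3) * t ^ (m + 2) + b * (m + 2) * t ^ (m + 1) := by
    funext t
    rw [(hasDerivAt_const_mul_pow_add_const_mul_pow a b (m + 1) t).deriv]
    push_cast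
    ring
  rw [hg, hg']
  funext t
  rw [(hasDerivAt_const_mul_pow_add_const_mul_pow (a * (m + 3)) (b * (m + 2)) m t).deriv]
  ring

theorem deriv_deriv_reliability_nonpos {α : ℝ} {m : ℕ} (hα : (m + 2 : ℝ) ≤ α * (m + 3))
    {μ : ℝ} (hμ : α ≤ μ) :
    deriv (deriv fun t : ℝ => t ^ (m + 3) + α * (m + 3) * (1 - t) * t ^ (m + 2)) μ ≤ 0 := by
  rw [deriv_deriv_reliability]
  have hα₀ : 0 ≤ α := by nlinarith
  have hbracket : (1 - α * (m + 3)) * μ + α * (m + 1) ≤ 0 := by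
    nlinarith [mul_le_mul_of_nonneg_left hμ (by linarith : (0 : ℝ) ≤ α * (m + 3) - 1)]
  exact mul_nonpos_of_nonneg_of_nonpos (by positivity [hα₀.trans hμ]) hbracket

/-- With `N = 10`, `α = 199/200` and
`g μ = μ^(N²) + α N² (1-μ) μ^(N²-1)`, the function `g` is concave on `[α,1]`:
its second derivative is nonpositive there. -/
theorem g_second_deriv_nonpos :
    ∀ μ ∈ Set.Icc ((199 : ℝ) / 200) 1,
      deriv (deriv fun t : ℝ =>
          t ^ (10 ^ 2) + (199 / 200) * (10 : ℝ) ^ 2 * (1 - t) * t ^ (10 ^ 2 - 1)) μ ≤ 0 := by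
  intro μ hμ
  have hg : (fun t : ℝ =>
      t ^ (10 ^ 2) + (199 / 200) * (10 : ℝ) ^ 2 * (1 - t) * t ^ (10 ^ 2 - 1)) =
      fun t : ℝ => t ^ (97 + 3) + (199 / 200) * ((97 : ℕ) + 3) * (1 - t) * t ^ (97 + 2) := by
    norm_num
  rw [hg]
  exact deriv_deriv_reliability_nonpos (by norm_num) hμ.1
end

section
/- Let g(μ) = μ^{100} + (199/200)·100·(1-μ)·μ^{99} and β = 1 - 10^{-5}. Then ∏_{i=1}^{∞} (1 - γ^i·(1-μ)) ≥ 1 - 10^{-4} for all μ ≥ β, where γ = (1 - g(β))/(1 - β). -/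
noncomputable def g (μ : ℝ) : ℝ := μ ^ 100 + (199 / 200) * 100 * (1 - μ) * μ ^ 99

noncomputable def β : ℝ := 1 - 10 ^ (-5 : ℤ)

noncomputable def γ : ℝ := (1 - g β) / (1 - β)

/-! The factors are `1 - γ^(i+1) x` with `x = 1 - μ`. When `0 ≤ x ≤ 1` the Weierstrass
inequality `∏ (1 - aᵢ) ≥ 1 - ∑ aᵢ` bounds the product below by `1 - γ x / (1 - γ)`,
and a numerical evaluation gives `γ ≤ 10/11`, i.e. `γ / (1 - γ) ≤ 10`, so the loss is at most
`10 · 10⁻⁵`. When `x < 0` every factor exceeds `1`. -/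

open Filter

theorem Finset.one_sub_sum_le_prod_one_sub {ι R : Type*} [CommRing R] [LinearOrder R]
    [IsStrictOrderedRing R] (s : Finset ι) {a : ι → R}
    (h0 : ∀ i ∈ s, 0 ≤ a i) (h1 : ∀ i ∈ s, a i ≤ 1) :
    1 - ∑ i ∈ s, a i ≤ ∏ i ∈ s, (1 - a i) := by
  classical
  induction s using Finset.cons_induction with
  | empty => simp
  | cons j s hj ih =>
    simp only [Finset.mem_cons, forall_eq_or_imp] at h0 h1
    rw [Finset.prod_cons, Finset.sum_cons]
    have hsum : 0 ≤ ∑ i ∈ s, a i := Finset.sum_nonneg h0.2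
    have hj1 : 0 ≤ 1 - a j := by linarith [h1.1]
    nlinarith [mul_le_mul_of_nonneg_left (ih h0.2 h1.2) hj1, h0.1]

theorem Real.multipliable_one_sub_of_summable {ι : Type*} {a : ι → ℝ} (ha : Summable a) :
    Multipliable fun i ↦ 1 - a i := by
  simpa only [sub_eq_add_neg] using Real.multipliable_one_add_of_summable ha.neg

theorem Real.one_sub_tsum_le_tprod_one_sub {ι : Type*} {a : ι → ℝ} (ha : Summable a)
    (h0 : ∀ i, 0 ≤ a i) (h1 : ∀ i, a i ≤ 1) :
    1 - ∑' i, a i ≤ ∏' i, (1 - a i) := by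
  refine ge_of_tendsto (Real.multipliable_one_sub_of_summable ha).hasProd
    (Eventually.of_forall fun s ↦ ?_)
  calc 1 - ∑' i, a i ≤ 1 - ∑ i ∈ s, a i := by
        linarith [ha.sum_le_tsum s fun i _ ↦ h0 i]
    _ ≤ ∏ i ∈ s, (1 - a i) :=
        s.one_sub_sum_le_prod_one_sub (fun i _ ↦ h0 i) fun i _ ↦ h1 i

theorem Real.one_le_tprod {ι : Type*} {f : ι → ℝ} (hf : Multipliable f)
    (h : ∀ i, 1 ≤ f i) :
    1 ≤ ∏' i, f i :=
  ge_of_tendsto hf.hasProd <| Eventually.of_forall fun _ ↦ Finset.one_le_prod fun i _ ↦ h i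

variable {r : ℝ}

theorem hasSum_pow_succ_mul (hr0 : 0 ≤ r) (hr1 : r < 1) (x : ℝ) :
    HasSum (fun i : ℕ ↦ r ^ (i + 1) * x) (r / (1 - r) * x) := by
  have hterm : (fun i : ℕ ↦ r ^ (i + 1) * x) = fun i ↦ r * x * r ^ i := by ext i; ring
  rw [hterm, div_mul_eq_mul_div, div_eq_mul_inv]
  exact (hasSum_geometric_of_lt_one hr0 hr1).mul_left (r * x)

theorem one_sub_le_tprod_one_sub_pow_succ_mul (hr0 : 0 ≤ r) (hr1 : r < 1) {x : ℝ}
    (hx0 : 0 ≤ x) (hx1 : x ≤ 1) :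
    1 - r / (1 - r) * x ≤ ∏' i : ℕ, (1 - r ^ (i + 1) * x) := by
  rw [← (hasSum_pow_succ_mul hr0 hr1 x).tsum_eq]
  refine Real.one_sub_tsum_le_tprod_one_sub (hasSum_pow_succ_mul hr0 hr1 x).summable
    (fun i ↦ by positivity) fun i ↦ ?_
  nlinarith [pow_le_one₀ (n := i + 1) hr0 hr1.le]

theorem one_le_tprod_one_sub_pow_succ_mul (hr0 : 0 ≤ r) (hr1 : r < 1) {x : ℝ} (hx : x ≤ 0) :
    1 ≤ ∏' i : ℕ, (1 - r ^ (i + 1) * x) :=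
  Real.one_le_tprod
    (Real.multipliable_one_sub_of_summable (hasSum_pow_succ_mul hr0 hr1 x).summable)
    fun i ↦ by nlinarith [pow_nonneg hr0 (i + 1)]

theorem γ_nonneg : 0 ≤ γ := by norm_num [γ, g, β]

theorem γ_le_ten_div_eleven : γ ≤ 10 / 11 := by norm_num [γ, g, β]

/-- For all `μ ≥ β`, `∏_{i=1}^∞ (1 - γ^i (1-μ)) ≥ 1 - 10⁻⁴`. -/
theorem infinite_product_ge (μ : ℝ) (hμ : β ≤ μ) :
    1 - 10 ^ (-4 : ℤ) ≤ ∏' i : ℕ, (1 - γ ^ (i + 1) * (1 - μ)) := by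
  have hγ1 : γ < 1 := γ_le_ten_div_eleven.trans_lt (by norm_num)
  rcases le_or_gt μ 1 with hμ1 | hμ1
  · have hx : 1 - μ ≤ 10 ^ (-5 : ℤ) := by rw [β] at hμ; linarith
    have hratio : γ / (1 - γ) ≤ 10 := by
      rw [div_le_iff₀ (by linarith)]; linarith [γ_le_ten_div_eleven]
    calc (1 : ℝ) - 10 ^ (-4 : ℤ) = 1 - 10 * 10 ^ (-5 : ℤ) := by norm_num
      _ ≤ 1 - γ / (1 - γ) * (1 - μ) := by gcongr
      _ ≤ _ := one_sub_le_tprod_one_sub_pow_succ_mul γ_nonneg hγ1 (by linarith)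
        (hx.trans (by norm_num))
  · calc (1 : ℝ) - 10 ^ (-4 : ℤ) ≤ 1 := by norm_num
      _ ≤ _ := one_le_tprod_one_sub_pow_succ_mul γ_nonneg hγ1 (by linarith)
end
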